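/- Let M be a connected simple matroid of rank r ≥ 3 with β(M) = 1 that is parallel irreducible, and let e₁ be an edge incident to a degree-2 vertex in a graphic representation of M as a series-parallel network. If M is a series connection relative to e₁, then M has at most one 3-element circuit containing e₁, and consequently the simplification of M/e₁ has at least |M| − 2 elements. -/

import Mathlib

open Set Polynomial Matroid CategoryTheory

universe u

namespace PaperBC

variable {α : Type*}

/-- A circuit of a matroid: a minimal dependent subset of the ground set. -/
def MCircuit (M : Matroid α) (C : Set α) : Prop :=
  ¬ M.Indep C ∧ C ⊆ M.E ∧ ∀ D, D ⊂ C → M.Indep D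

/-- A broken circuit with respect to an order relation `r` (to be read as `≤`):
a circuit with its least element removed. -/
def BrokenCircuit (r : α → α → Prop) (M : Matroid α) (B : Set α) : Prop :=
  ∃ C e, MCircuit M C ∧ e ∈ C ∧ (∀ x ∈ C, r e x) ∧ B = C \ {e}

/-- The broken circuit complex: subsets of the ground set containing no broken circuit. -/
def BCC (r : α → α → Prop) (M : Matroid α) : Set (Set α) :=
  {F | F ⊆ M.E ∧ ∀ B, BrokenCircuit r M B → ¬ B ⊆ F}

/-- The independence (matroid) complex. -/
def IndepComplex (M : Matroid α) : Set (Set α) := {F | M.Indep F}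

/-- The link of a face in a complex. -/
def linkOf (Δ : Set (Set α)) (F : Set α) : Set (Set α) :=
  {G | F ∪ G ∈ Δ ∧ Disjoint F G}

/-- Vertex set of a complex. -/
def vertexSet (Δ : Set (Set α)) : Set α := {v | {v} ∈ Δ}

def dimLE (Δ : Set (Set α)) (d : ℕ) : Prop := ∀ s ∈ Δ, s.ncard ≤ d + 1

def dimEq (Δ : Set (Set α)) (d : ℕ) : Prop := dimLE Δ d ∧ ∃ s ∈ Δ, s.ncard = d + 1

/-- `Δ` is an `n`-gon (cycle) as a 1-dimensional complex. -/
def IsNGon (Δ : Set (Set α)) (n : ℕ) : Prop :=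
  3 ≤ n ∧ ∃ v : ℕ → α, (∀ i j, i < n → j < n → v i = v j → i = j) ∧
    Δ = {s | s = ∅ ∨ (∃ i < n, s = {v i}) ∨ ∃ i < n, s = {v i, v ((i + 1) % n)}}

/-- `Δ` is a path on `m` vertices as a simplicial complex. -/
def IsPathComplex (Δ : Set (Set α)) (m : ℕ) : Prop :=
  1 ≤ m ∧ ∃ v : ℕ → α, (∀ i j, i < m → j < m → v i = v j → i = j) ∧
    Δ = {s | s = ∅ ∨ (∃ i < m, s = {v i}) ∨ ∃ i, i + 1 < m ∧ s = {v i, v (i + 1)}}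

/-- The h-polynomial `h(t) = f(t-1)` of a complex with prescribed rank `r`,
where `f(t) = ∑ fᵢ t^{r-i}`. -/
noncomputable def hPoly (Δ : Set (Set α)) (r : ℕ) : Polynomial ℤ :=
  ∑ i ∈ Finset.range (r + 1),
    Polynomial.C (({s ∈ Δ | s.ncard = i}.ncard : ℤ)) * (X - 1) ^ (r - i)

/-- The `i`-th entry of the h-vector: the coefficient of `t^{r-i}` in the h-polynomial. -/
noncomputable def hVec (Δ : Set (Set α)) (r i : ℕ) : ℤ := (hPoly Δ r).coeff (r - i)

/-- The rank of a matroid, as the cardinality of some base. -/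
noncomputable def rk (M : Matroid α) : ℕ := M.exists_isBase.choose.ncard

/-- A simple matroid: every circuit has at least 3 elements. -/
def MSimple (M : Matroid α) : Prop := ∀ C, MCircuit M C → 3 ≤ C.ncard

/-- A connected matroid: any two distinct elements lie on a common circuit. -/
def MConnected (M : Matroid α) : Prop :=
  M.E.Nonempty ∧ ∀ e ∈ M.E, ∀ f ∈ M.E, e ≠ f → ∃ C, MCircuit M C ∧ e ∈ C ∧ f ∈ C

def MLoop (M : Matroid α) (e : α) : Prop := e ∈ M.E ∧ ¬ M.Indep {e}

def MColoop (M : Matroid α) (e : α) : Prop := e ∈ M.E ∧ ∀ B, M.IsBase B → e ∈ B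

/-- `M` is the parallel connection of `M₁` and `M₂` relative to `e`,
characterized by its set of circuits. -/
def IsParallelConn (M M₁ M₂ : Matroid α) (e : α) : Prop :=
  M₁.E ∩ M₂.E = {e} ∧ M.E = M₁.E ∪ M₂.E ∧
  ¬ MLoop M₁ e ∧ ¬ MColoop M₁ e ∧ ¬ MLoop M₂ e ∧ ¬ MColoop M₂ e ∧
  ∀ C, MCircuit M C ↔ (MCircuit M₁ C ∨ MCircuit M₂ C ∨
    ∃ C₁ C₂, MCircuit M₁ C₁ ∧ MCircuit M₂ C₂ ∧ e ∈ C₁ ∧ e ∈ C₂ ∧ C = (C₁ ∪ C₂) \ {e})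

/-- `M` is the series connection of `M₁` and `M₂` relative to `e`,
characterized by its set of circuits. -/
def IsSeriesConn (M M₁ M₂ : Matroid α) (e : α) : Prop :=
  M₁.E ∩ M₂.E = {e} ∧ M.E = M₁.E ∪ M₂.E ∧
  ¬ MLoop M₁ e ∧ ¬ MColoop M₁ e ∧ ¬ MLoop M₂ e ∧ ¬ MColoop M₂ e ∧
  ∀ C, MCircuit M C ↔ ((MCircuit M₁ C ∧ e ∉ C) ∨ (MCircuit M₂ C ∧ e ∉ C) ∨
    ∃ C₁ C₂, MCircuit M₁ C₁ ∧ MCircuit M₂ C₂ ∧ e ∈ C₁ ∧ e ∈ C₂ ∧ C = C₁ ∪ C₂)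

/-- Contraction of a single element, via duality: `M/e = (M* − e)*`. -/
noncomputable def contractElem (M : Matroid α) (e : α) : Matroid α :=
  (M✶ ↾ (M.E \ {e}))✶

/-- `N` is a simplification of `M`: a simple restriction of `M` to a set meeting
every parallel class of non-loops. -/
def IsSimplificationOf (N M : Matroid α) : Prop :=
  ∃ S ⊆ M.E, N = M ↾ S ∧ MSimple N ∧
    ∀ x ∈ M.E, M.Indep {x} → ∃ y ∈ S, x = y ∨ MCircuit M {x, y}

/-- `M` is (a copy of) the uniform matroid `U_{m,m+1}`. -/
def IsUnifNearCircuit (M : Matroid α) (m : ℕ) : Prop :=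
  M.E.ncard = m + 1 ∧ ∀ I, M.Indep I ↔ I ⊆ M.E ∧ I.ncard ≤ m

/-- The minimal broken circuits of an ordered matroid. -/
def MinBrokenCircuit (r : α → α → Prop) (M : Matroid α) (B : Set α) : Prop :=
  BrokenCircuit r M B ∧ ∀ B', BrokenCircuit r M B' → B' ⊆ B → B' = B

/-- A (nonempty) connected component of a matroid: a circuit-closed subset of the
ground set on which the restriction is connected. -/
def IsComponent (M : Matroid α) (S : Set α) : Prop :=
  S ⊆ M.E ∧ S.Nonempty ∧ MConnected (M ↾ S) ∧
    ∀ C, MCircuit M C → C ⊆ S ∨ Disjoint C S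

/-- Series-parallel networks: matroids obtained from a two-element circuit by
iterated series and parallel connections. -/
inductive IsSPNetwork : Matroid α → Prop
  | twoCircuit (M : Matroid α) (h1 : M.E.ncard = 2) (h2 : MCircuit M M.E) : IsSPNetwork M
  | series (M N P : Matroid α) (e : α) (h1 : P.E.ncard = 2) (h2 : MCircuit P P.E)
      (hN : IsSPNetwork N) (h : IsSeriesConn M N P e) : IsSPNetwork M
  | parallel (M N P : Matroid α) (e : α) (h1 : P.E.ncard = 2) (h2 : MCircuit P P.E)
      (hN : IsSPNetwork N) (h : IsParallelConn M N P e) : IsSPNetwork M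

/-- Iterated parallel connections of uniform matroids `U_{m,m+1}`, `m ≥ 2`. -/
inductive IsIterParallelUnif : Matroid α → Prop
  | unif (M : Matroid α) (m : ℕ) (h2 : 2 ≤ m) (h : IsUnifNearCircuit M m) :
      IsIterParallelUnif M
  | parallel (M N P : Matroid α) (e : α) (m : ℕ) (h2 : 2 ≤ m)
      (hN : IsIterParallelUnif N) (hP : IsUnifNearCircuit P m)
      (h : IsParallelConn M N P e) : IsIterParallelUnif M

/-- `M` is graphic: its circuits are the edge sets of cycles of some graph. -/
def IsGraphic (M : Matroid α) : Prop :=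
  ∃ (V : Type) (G : SimpleGraph V) (f : α → Sym2 V),
    Set.InjOn f M.E ∧ (∀ a ∈ M.E, f a ∈ G.edgeSet) ∧
    ∀ C, MCircuit M C ↔ C ⊆ M.E ∧
      ∃ (u : V) (w : G.Walk u u), w.IsCycle ∧ f '' C = {x | x ∈ w.edges}

/-- A minimal non-face of a complex. -/
def MinNonFace (Δ : Set (Set α)) (s : Set α) : Prop :=
  s ⊆ vertexSet Δ ∧ s ∉ Δ ∧ ∀ t, t ⊂ s → t ∈ Δ

/-- A complete intersection complex: the minimal non-faces are pairwise disjoint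
(equivalently, the Stanley–Reisner ring is a complete intersection). -/
def IsCIComplex (Δ : Set (Set α)) : Prop :=
  ∀ s t, MinNonFace Δ s → MinNonFace Δ t → s ≠ t → Disjoint s t

/-- The Stanley–Reisner ring of a complex over a field `K`. -/
abbrev SRRing (K : Type) [Field K] (Δ : Set (Set α)) :=
  MvPolynomial (vertexSet Δ) K ⧸ (Ideal.span
    {m : MvPolynomial (vertexSet Δ) K | ∃ s : Finset (vertexSet Δ),
      (Subtype.val '' (s : Set (vertexSet Δ))) ∉ Δ ∧ m = ∏ i ∈ s, MvPolynomial.X i})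

/-- A Gorenstein ring: Noetherian with finite self-injective dimension
(expressed by eventual vanishing of `Ext^i(—, R)`). -/
def IsGorensteinRing (R : Type u) [CommRing R] : Prop :=
  IsNoetherianRing R ∧ ∃ n : ℕ, ∀ (M : ModuleCat.{u} R) (i : ℕ), n < i →
    Subsingleton (((Ext R (ModuleCat.{u} R) i).obj (Opposite.op M)).obj (ModuleCat.of R R))

/-! A triangle through `e₁` in a series connection is `C₁ ∪ C₂` with `Cᵢ` a two-element circuit
of `Mᵢ` through `e₁`. Two such circuits in the same factor would, by circuit elimination, leave a
circuit of `Mᵢ` of at most two elements avoiding `e₁`; it is a circuit of `M`, against simplicity.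
So there is at most one triangle `{e₁, a, b}`. A parallel pair `{x, y}` of `M / e₁` makes
`{e₁, x, y}` a triangle of the simple matroid `M`, hence every parallel class of `M / e₁` is a
singleton except possibly `{a, b}`, and the simplification misses at most `e₁` and one of `a, b`. -/

section

variable {M N M₁ M₂ : Matroid α} {C C' D D' X S : Set α} {e a b c x : α}

def AtMostOneTriangleThrough (M : Matroid α) (e : α) : Prop :=
  ∀ C C', MCircuit M C → MCircuit M C' → e ∈ C → e ∈ C' → C.ncard = 3 → C'.ncard = 3 → C = C'

lemma mCircuit_iff_isCircuit : MCircuit M C ↔ M.IsCircuit C := by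
  rw [isCircuit_iff_forall_ssubset, Dep, MCircuit, and_assoc]

lemma ncard_pair_le (a b : α) : ({a, b} : Set α).ncard ≤ 2 :=
  (ncard_insert_le a {b}).trans (by rw [ncard_singleton])

lemma ncard_triple_le (a b c : α) : ({a, b, c} : Set α).ncard ≤ 3 :=
  (ncard_insert_le a {b, c}).trans (Nat.add_le_add_right (ncard_pair_le b c) 1)

lemma ncard_sub_two_le_of_sdiff_pair_subset {s t : Set α} (h : s \ {a, b} ⊆ t) (ht : t.Finite) :
    s.ncard - 2 ≤ t.ncard :=
  calc s.ncard - 2 ≤ s.ncard - ({a, b} : Set α).ncard := Nat.sub_le_sub_left (ncard_pair_le a b) _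
    _ ≤ (s \ {a, b}).ncard := le_ncard_sdiff _ _
    _ ≤ t.ncard := ncard_le_ncard h ht

lemma two_le_ncard_of_mCircuit (hC : MCircuit M C) (heC : e ∈ C) (he : ¬ MLoop M e)
    (hCfin : C.Finite) : 2 ≤ C.ncard := by
  have hssub : {e} ⊂ C := (singleton_subset_iff.2 heC).ssubset_of_ne <| by
    rintro rfl
    exact he ⟨hC.2.1 heC, hC.1⟩
  exact Nat.succ_le_of_lt (by simpa using ncard_lt_ncard hssub hCfin)

namespace MSimple

lemma indep_of_ncard_le_two (hM : MSimple M) (hX : X ⊆ M.E) (hXfin : X.Finite)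
    (hX2 : X.ncard ≤ 2) : M.Indep X := by
  by_contra hdep
  obtain ⟨C, hCX, hC⟩ := ((not_indep_iff hX).1 hdep).exists_isCircuit_subset
  have h3 := hM C (mCircuit_iff_isCircuit.2 hC)
  have hle := ncard_le_ncard hCX hXfin
  omega

lemma isNonloop (hM : MSimple M) (he : e ∈ M.E) : M.IsNonloop e :=
  indep_singleton.1 (hM.indep_of_ncard_le_two (singleton_subset_iff.2 he) (toFinite _) (by simp))

lemma ne_of_mCircuit_triple (hM : MSimple M) (h : MCircuit M {a, b, c}) : a ≠ b := by
  rintro rfl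
  have h3 := hM _ h
  rw [insert_eq_of_mem (mem_insert a {c})] at h3
  have := ncard_pair_le a c
  omega

lemma indep_contractElem_singleton (hM : MSimple M) (he : e ∈ M.E) (hx : x ∈ M.E) (hxe : x ≠ e) :
    (contractElem M e).Indep {x} := by
  have hpair : M.Indep {e, x} :=
    hM.indep_of_ncard_le_two (insert_subset he (singleton_subset_iff.2 hx)) (toFinite _)
      (ncard_pair_le e x)
  exact (hM.isNonloop he).contractElem_indep_iff.2
    ⟨fun h => hxe (eq_of_mem_singleton h).symm, hpair⟩

/-- Every proper subset of a triple is independent in a simple matroid, so `{e, a, b}` is a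
circuit as soon as it is dependent. -/
lemma mCircuit_insert_of_mCircuit_contractElem (hM : MSimple M) (he : e ∈ M.E)
    (hC : MCircuit (contractElem M e) {a, b}) : MCircuit M {e, a, b} := by
  have hab : ({a, b} : Set α) ⊆ M.E \ {e} := hC.2.1
  have hE : ({e, a, b} : Set α) ⊆ M.E := insert_subset he (hab.trans sdiff_subset)
  refine ⟨fun hind => hC.1 ?_, hE, fun D hD => ?_⟩
  · exact (hM.isNonloop he).contractElem_indep_iff.2 ⟨fun h => (hab h).2 rfl, hind⟩
  · have hlt := ncard_lt_ncard hD (toFinite _)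
    have := ncard_triple_le e a b
    exact hM.indep_of_ncard_le_two (hD.subset.trans hE) ((toFinite _).subset hD.subset) (by omega)

lemma eq_of_mCircuit_ncard_eq_two (hM : MSimple M)
    (hN : ∀ D, MCircuit N D → e ∉ D → MCircuit M D) (hD : MCircuit N D) (hD' : MCircuit N D')
    (heD : e ∈ D) (heD' : e ∈ D') (h2 : D.ncard = 2) (h2' : D'.ncard = 2) : D = D' := by
  by_contra hne
  obtain ⟨C, hCsub, hC⟩ :=
    (mCircuit_iff_isCircuit.1 hD).elimination (mCircuit_iff_isCircuit.1 hD') hne e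
  have hDfin : D.Finite := finite_of_ncard_ne_zero (by omega)
  have hD'fin : D'.Finite := finite_of_ncard_ne_zero (by omega)
  have hsum := ncard_union_add_ncard_inter D D' hDfin hD'fin
  have hinter : 0 < (D ∩ D').ncard := (ncard_pos (hDfin.subset inter_subset_left)).2 ⟨e, heD, heD'⟩
  have hdiff := ncard_sdiff_singleton_of_mem (mem_union_left D' heD)
  have hCle := ncard_le_ncard hCsub (hDfin.union hD'fin).sdiff
  have h3 := hM C (hN C (mCircuit_iff_isCircuit.2 hC) fun h => (hCsub h).2 rfl)
  omega

lemma exists_sdiff_pair_subset (hM : MSimple M)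
    (huniq : AtMostOneTriangleThrough M e)
    (hcover : ∀ x ∈ M.E, x ≠ e → ∃ y ∈ S, x = y ∨ MCircuit M {e, x, y}) :
    ∃ a, M.E \ {e, a} ⊆ S := by
  have heq : ∀ {x y a b}, MCircuit M {e, x, y} → MCircuit M {e, a, b} →
      ({e, x, y} : Set α) = {e, a, b} := fun h h' => huniq _ _ h h' (mem_insert _ _)
    (mem_insert _ _) ((ncard_triple_le _ _ _).antisymm (hM _ h))
    ((ncard_triple_le _ _ _).antisymm (hM _ h'))
  by_cases htri : ∃ a b, MCircuit M {e, a, b}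
  · obtain ⟨a, b, hab⟩ := htri
    obtain ⟨a', b', hT, hb'S⟩ : ∃ a' b', MCircuit M {e, a', b'} ∧ b' ∈ S := by
      obtain ⟨y, hyS, rfl | hy⟩ :=
        hcover a (hab.2.1 (by simp)) (hM.ne_of_mCircuit_triple hab).symm
      · exact ⟨b, a, by rwa [pair_comm], hyS⟩
      · exact ⟨a, y, hy, hyS⟩
    refine ⟨a', fun x ⟨hxE, hx⟩ => ?_⟩
    simp only [mem_insert_iff, mem_singleton_iff, not_or] at hx
    obtain ⟨y, hyS, rfl | hy⟩ := hcover x hxE hx.1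
    · exact hyS
    · have hxT : x ∈ ({e, a', b'} : Set α) := heq hy hT ▸ mem_insert_of_mem _ (mem_insert x _)
      simp only [mem_insert_iff, mem_singleton_iff, hx.1, hx.2, false_or] at hxT
      exact hxT ▸ hb'S
  · refine ⟨e, fun x hx => ?_⟩
    have hxe : x ≠ e := fun h => hx.2 (h ▸ mem_insert x _)
    obtain ⟨y, hyS, rfl | hy⟩ := hcover x hx.1 hxe
    · exact hyS
    · exact absurd ⟨x, y, hy⟩ htri

lemma ncard_sub_two_le_of_isSimplificationOf_contractElem (hM : MSimple M) (he : e ∈ M.E)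
    (huniq : AtMostOneTriangleThrough M e)
    (hN : IsSimplificationOf N (contractElem M e)) : M.E.ncard - 2 ≤ N.E.ncard := by
  obtain ⟨S, hSE, rfl, -, hcover⟩ := hN
  obtain ⟨a, ha⟩ := hM.exists_sdiff_pair_subset huniq fun x hx hxe => by
    obtain ⟨y, hyS, hxy⟩ := hcover x ⟨hx, hxe⟩ (hM.indep_contractElem_singleton he hx hxe)
    exact ⟨y, hyS, hxy.imp_right (hM.mCircuit_insert_of_mCircuit_contractElem he)⟩
  rcases S.finite_or_infinite with hS | hS
  · exact ncard_sub_two_le_of_sdiff_pair_subset ha hS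
  · simp [(hS.mono (hSE.trans sdiff_subset)).ncard]

end MSimple

namespace IsSeriesConn

lemma mCircuit_of_left (h : IsSeriesConn M M₁ M₂ e) (hD : MCircuit M₁ D) (heD : e ∉ D) :
    MCircuit M D :=
  (h.2.2.2.2.2.2 D).2 (.inl ⟨hD, heD⟩)

lemma mCircuit_of_right (h : IsSeriesConn M M₁ M₂ e) (hD : MCircuit M₂ D) (heD : e ∉ D) :
    MCircuit M D :=
  (h.2.2.2.2.2.2 D).2 (.inr (.inl ⟨hD, heD⟩))

lemma exists_pairs_of_triangle (h : IsSeriesConn M M₁ M₂ e) (hC : MCircuit M C) (heC : e ∈ C)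
    (h3 : C.ncard = 3) :
    ∃ C₁ C₂, MCircuit M₁ C₁ ∧ MCircuit M₂ C₂ ∧ e ∈ C₁ ∧ e ∈ C₂ ∧
      C₁.ncard = 2 ∧ C₂.ncard = 2 ∧ C = C₁ ∪ C₂ := by
  obtain ⟨hE, -, hl₁, -, hl₂, -, hcirc⟩ := h
  rcases (hcirc C).1 hC with ⟨-, he⟩ | ⟨-, he⟩ | ⟨C₁, C₂, hC₁, hC₂, he₁, he₂, rfl⟩
  · exact absurd heC he
  · exact absurd heC he
  have hfin : (C₁ ∪ C₂).Finite := finite_of_ncard_ne_zero (by omega)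
  have hinter : C₁ ∩ C₂ = {e} :=
    (hE ▸ inter_subset_inter hC₁.2.1 hC₂.2.1).antisymm (singleton_subset_iff.2 ⟨he₁, he₂⟩)
  have hsum := ncard_union_add_ncard_inter C₁ C₂
    (hfin.subset subset_union_left) (hfin.subset subset_union_right)
  have h₁ := two_le_ncard_of_mCircuit hC₁ he₁ hl₁ (hfin.subset subset_union_left)
  have h₂ := two_le_ncard_of_mCircuit hC₂ he₂ hl₂ (hfin.subset subset_union_right)
  rw [hinter, ncard_singleton] at hsum
  exact ⟨C₁, C₂, hC₁, hC₂, he₁, he₂, by omega, by omega, rfl⟩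

lemma atMostOneTriangleThrough (h : IsSeriesConn M M₁ M₂ e) (hM : MSimple M) :
    AtMostOneTriangleThrough M e := by
  intro C C' hC hC' heC heC' h3 h3'
  obtain ⟨C₁, C₂, hC₁, hC₂, he₁, he₂, h₁, h₂, rfl⟩ := h.exists_pairs_of_triangle hC heC h3
  obtain ⟨C₁', C₂', hC₁', hC₂', he₁', he₂', h₁', h₂', rfl⟩ :=
    h.exists_pairs_of_triangle hC' heC' h3'
  rw [hM.eq_of_mCircuit_ncard_eq_two (fun _ => h.mCircuit_of_left) hC₁ hC₁' he₁ he₁' h₁ h₁',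
    hM.eq_of_mCircuit_ncard_eq_two (fun _ => h.mCircuit_of_right) hC₂ hC₂' he₂ he₂' h₂ h₂']

end IsSeriesConn

end

theorem at_most_one_triangle_of_seriesConn_general {α : Type*}
    (M : Matroid α)
    (hsimple : MSimple M)
    (e₁ : α) (he₁ : e₁ ∈ M.E)
    (hser : ∃ (M₁ M₂ : Matroid α),
      M₁.E ⊂ M.E ∧ M₂.E ⊂ M.E ∧ IsSeriesConn M M₁ M₂ e₁) :
    (∀ C C', MCircuit M C → MCircuit M C' → e₁ ∈ C → e₁ ∈ C' →
      C.ncard = 3 → C'.ncard = 3 → C = C') ∧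
    ∀ N, IsSimplificationOf N (contractElem M e₁) →
      M.E.ncard - 2 ≤ N.E.ncard := by
  obtain ⟨M₁, M₂, -, -, hM⟩ := hser
  have huniq := hM.atMostOneTriangleThrough hsimple
  exact ⟨huniq, fun _ => hsimple.ncard_sub_two_le_of_isSimplificationOf_contractElem he₁ huniq⟩

/-- in the setting of the proof of Theorem 1.2, a series
connection relative to `e₁` has at most one 3-element circuit containing `e₁`,
so the simplification of `M/e₁` has at least `|M| − 2` elements. -/
theorem at_most_one_triangle_of_seriesConn {α : Type*} [LinearOrder α]
    (M : Matroid α) (hfin : M.E.Finite) (hconn : MConnected M)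
    (hsimple : MSimple M) (r : ℕ) (hr3 : 3 ≤ r)
    (hr : ∀ B, M.IsBase B → B.ncard = r)
    (hbeta : hVec (BCC (· ≤ ·) M) r (r - 1) = 1)
    (hirr : ¬ ∃ (M₁ M₂ : Matroid α) (e : α),
      M₁.E ⊂ M.E ∧ M₂.E ⊂ M.E ∧ IsParallelConn M M₁ M₂ e)
    (e₁ : α) (he₁ : e₁ ∈ M.E)
    (hrep : ∃ (V : Type) (G : SimpleGraph V) (f : α → Sym2 V),
      Set.InjOn f M.E ∧ (∀ a ∈ M.E, f a ∈ G.edgeSet) ∧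
      (∀ C, MCircuit M C ↔ C ⊆ M.E ∧
        ∃ (u : V) (w : G.Walk u u), w.IsCycle ∧ f '' C = {x | x ∈ w.edges}) ∧
      ∃ v : V, (G.neighborSet v).ncard = 2 ∧ v ∈ f e₁)
    (hser : ∃ (M₁ M₂ : Matroid α),
      M₁.E ⊂ M.E ∧ M₂.E ⊂ M.E ∧ IsSeriesConn M M₁ M₂ e₁) :
    (∀ C C', MCircuit M C → MCircuit M C' → e₁ ∈ C → e₁ ∈ C' →
      C.ncard = 3 → C'.ncard = 3 → C = C') ∧
    ∀ N, IsSimplificationOf N (contractElem M e₁) →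
      M.E.ncard - 2 ≤ N.E.ncard :=
  at_most_one_triangle_of_seriesConn_general M hsimple e₁ he₁ hser

end PaperBC
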